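/- Let P be a plain metric logic program over alphabet 𝒜, let λ ≥ 1, and let M = ((⟨T_i,T_i⟩)_{0≤i<λ}, τ) be a total timed HT-trace of length λ. If M is a metric equilibrium model of P, then θ^c(M) is a constraint equilibrium model of Π_λ(P) ∪ Δ^c_λ ∪ Ψ^c_λ(P). -/

import Mathlib

namespace MetricASP

/-- Metric intervals `[m..n)` with `n = none` standing for `ω`. -/
structure Interval : Type where
  m : ℕ
  n : Option ℕ

/-- `x ∈ [m..n)` iff `m ≤ x` and (`n = ω` or `x < n`). -/
def Interval.mem (I : Interval) (x : ℕ) : Prop :=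
  I.m ≤ x ∧ ∀ nn ∈ I.n, x < nn

/-- The interval `[0..ω)`. -/
def fullInterval : Interval := ⟨0, none⟩

/-- Metric formulas over an alphabet `α`. -/
inductive MF (α : Type) : Type
  | fls
  | atom (a : α)
  | conj (φ ψ : MF α)
  | disj (φ ψ : MF α)
  | impl (φ ψ : MF α)
  | init
  | next (I : Interval) (φ : MF α)
  | always (I : Interval) (φ : MF α)
  | evt (I : Interval) (φ : MF α)

def MF.neg {α : Type} (φ : MF α) : MF α := .impl φ .fls
def MF.top {α : Type} : MF α := MF.neg .fls
def MF.fin {α : Type} : MF α := MF.neg (.next fullInterval MF.top)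

/-- Timing function wrt `lam`. -/
def IsTiming (lam : ℕ) (τ : ℕ → ℕ) : Prop :=
  τ 0 = 0 ∧ ∀ k, k + 1 < lam → τ k < τ (k + 1)

/-- `H i ⊆ T i` for all relevant indices. -/
def IsTrace {α : Type} (lam : ℕ) (H T : ℕ → Set α) : Prop :=
  ∀ i, i < lam → H i ⊆ T i

/-- Satisfaction of a metric formula by a timed HT-trace of length `lam`. -/
def MSat {α : Type} (lam : ℕ) (τ : ℕ → ℕ) :
    (ℕ → Set α) → (ℕ → Set α) → ℕ → MF α → Prop
  | _, _, _, .fls => False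
  | H, _, k, .atom a => a ∈ H k
  | H, T, k, .conj φ ψ => MSat lam τ H T k φ ∧ MSat lam τ H T k ψ
  | H, T, k, .disj φ ψ => MSat lam τ H T k φ ∨ MSat lam τ H T k ψ
  | H, T, k, .impl φ ψ =>
      (MSat lam τ H T k φ → MSat lam τ H T k ψ) ∧
      (MSat lam τ T T k φ → MSat lam τ T T k ψ)
  | _, _, k, .init => k = 0
  | H, T, k, .next I φ =>
      k + 1 < lam ∧ MSat lam τ H T (k + 1) φ ∧ I.mem (τ (k + 1) - τ k)
  | H, T, k, .evt I φ =>
      ∃ i, k ≤ i ∧ i < lam ∧ I.mem (τ i - τ k) ∧ MSat lam τ H T i φ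
  | H, T, k, .always I φ =>
      ∀ i, k ≤ i → i < lam → I.mem (τ i - τ k) → MSat lam τ H T i φ

/-- MHT-model of a set of metric formulas. -/
def MHTModels {α : Type} (lam : ℕ) (τ : ℕ → ℕ) (H T : ℕ → Set α)
    (Γ : Set (MF α)) : Prop :=
  ∀ φ ∈ Γ, MSat lam τ H T 0 φ

/-- Metric equilibrium model (of the total trace given by `T` and `τ`). -/
def MetricEqModel {α : Type} (lam : ℕ) (τ : ℕ → ℕ) (T : ℕ → Set α)
    (Γ : Set (MF α)) : Prop :=
  MHTModels lam τ T T Γ ∧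
  ∀ H : ℕ → Set α, IsTrace lam H T → (∃ i, i < lam ∧ H i ≠ T i) →
    ¬ MHTModels lam τ H T Γ

/-- Propositional formulas over atoms `β`. -/
inductive PF (β : Type) : Type
  | fls
  | atom (a : β)
  | and (φ ψ : PF β)
  | or (φ ψ : PF β)
  | imp (φ ψ : PF β)

def PF.neg {β : Type} (φ : PF β) : PF β := .imp φ .fls
def PF.top {β : Type} : PF β := PF.neg .fls

def bigOr {β : Type} (l : List (PF β)) : PF β := l.foldr .or .fls
def bigAnd {β : Type} (l : List (PF β)) : PF β := l.foldr .and PF.top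

/-- Here-and-there satisfaction. -/
def HSat {β : Type} : Set β → Set β → PF β → Prop
  | _, _, .fls => False
  | H, _, .atom a => a ∈ H
  | H, T, .and φ ψ => HSat H T φ ∧ HSat H T ψ
  | H, T, .or φ ψ => HSat H T φ ∨ HSat H T ψ
  | H, T, .imp φ ψ => (HSat H T φ → HSat H T ψ) ∧ (HSat T T φ → HSat T T ψ)

def HTModels {β : Type} (H T : Set β) (Γ : Set (PF β)) : Prop :=
  ∀ φ ∈ Γ, HSat H T φ

/-- `T` (as the total interpretation `⟨T,T⟩`) is an equilibrium model of `Γ`. -/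
def EqModel {β : Type} (T : Set β) (Γ : Set (PF β)) : Prop :=
  HTModels T T Γ ∧ ∀ H : Set β, H ⊂ T → ¬ HTModels H T Γ

/-- Literals over atoms `β`. -/
inductive Lit (β : Type) : Type
  | pos (a : β)
  | neg (a : β)

/-- Body atoms: atoms of the alphabet, `𝗜`, or `𝗙`. -/
inductive BAt (α : Type) : Type
  | atm (a : α)
  | init
  | fin

/-- A plain metric rule: `□(α ← β)` or `□(◯_I a ← β)`. -/
inductive PlainRule (α : Type) : Type
  | basic (head : List (Lit α)) (body : List (Lit (BAt α)))
  | nxt (I : Interval) (a : α) (body : List (Lit (BAt α)))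

def litMF {α β : Type} (f : β → MF α) : Lit β → MF α
  | .pos a => f a
  | .neg a => MF.neg (f a)

def BAt.mf {α : Type} : BAt α → MF α
  | .atm a => .atom a
  | .init => .init
  | .fin => MF.fin

def headMF {α : Type} (l : List (Lit α)) : MF α :=
  (l.map (litMF MF.atom)).foldr .disj .fls

def bodyMF {α : Type} (l : List (Lit (BAt α))) : MF α :=
  (l.map (litMF BAt.mf)).foldr .conj MF.top

/-- The metric formula corresponding to a plain metric rule. -/
def PlainRule.mf {α : Type} : PlainRule α → MF α
  | .basic h b => .always fullInterval (.impl (bodyMF b) (headMF h))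
  | .nxt I a b => .always fullInterval (.impl (bodyMF b) (.next I (.atom a)))

/-- Domain values: the Boolean truth value `𝐭` and the natural numbers. -/
inductive DVal : Type
  | tt
  | num (n : ℕ)

/-- Valuations: partial functions from variables to domain values. -/
def Valu (χ : Type) : Type := χ → Option DVal

/-- Graph inclusion of valuations. -/
def Valu.le {χ : Type} (v w : Valu χ) : Prop :=
  ∀ x d, v x = some d → w x = some d

/-- HTc satisfaction of constraint formulas, for a given denotation of atoms. -/
def CSat {χ κ : Type} (den : κ → Valu χ → Prop) :
    Valu χ → Valu χ → PF κ → Prop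
  | _, _, .fls => False
  | h, _, .atom c => den c h
  | h, t, .and φ ψ => CSat den h t φ ∧ CSat den h t ψ
  | h, t, .or φ ψ => CSat den h t φ ∨ CSat den h t ψ
  | h, t, .imp φ ψ =>
      (CSat den h t φ → CSat den h t ψ) ∧ (CSat den t t φ → CSat den t t ψ)

def CModels {χ κ : Type} (den : κ → Valu χ → Prop) (h t : Valu χ)
    (Γ : Set (PF κ)) : Prop :=
  ∀ φ ∈ Γ, CSat den h t φ

/-- `t` (as the total HTc-interpretation `⟨t,t⟩`) is a constraint equilibrium model. -/
def CEqModel {χ κ : Type} (den : κ → Valu χ → Prop) (t : Valu χ)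
    (Γ : Set (PF κ)) : Prop :=
  CModels den t t Γ ∧
  ∀ h : Valu χ, Valu.le h t → h ≠ t → ¬ CModels den h t Γ

/-- Variables of the HTc signature for the plain translation: `a_k` and `t_k`. -/
inductive CV (α : Type) : Type
  | av (a : α) (k : ℕ)
  | tv (k : ℕ)

/-- Constraint atoms: `a_k = 𝐭`, `t_k = d`, and `t_k − t_j ≤ d`. -/
inductive CAt (α : Type) : Type
  | bool (a : α) (k : ℕ)
  | eqN (k d : ℕ)
  | diff (k j : ℕ) (d : ℤ)

/-- Denotation of constraint atoms. -/
def CAt.den {α : Type} : CAt α → Valu (CV α) → Prop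
  | .bool a k, v => v (.av a k) = some .tt
  | .eqN k d, v => v (.tv k) = some (.num d)
  | .diff k j d, v => ∃ x y : ℕ,
      v (.tv k) = some (.num x) ∧ v (.tv j) = some (.num y) ∧ (x : ℤ) - (y : ℤ) ≤ d

def csigLit {β α : Type} (f : β → PF (CAt α)) : Lit β → PF (CAt α)
  | .pos a => f a
  | .neg a => PF.neg (f a)

def csigBAt {α : Type} (lam k : ℕ) : BAt α → PF (CAt α)
  | .atm a => .atom (.bool a k)
  | .init => if k = 0 then PF.top else .fls
  | .fin => if k = lam - 1 then PF.top else .fls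

def csigBody {α : Type} (lam k : ℕ) (b : List (Lit (BAt α))) : PF (CAt α) :=
  (b.map (csigLit (csigBAt lam k))).foldr .and PF.top

def csigHead {α : Type} (k : ℕ) (h : List (Lit α)) : PF (CAt α) :=
  (h.map (csigLit (fun a => PF.atom (CAt.bool a k)))).foldr .or .fls

/-- The translation `σ_k` of a plain metric rule, in the constraint language. -/
def csigRule {α : Type} (lam k : ℕ) : PlainRule α → PF (CAt α)
  | .basic h b => .imp (csigBody lam k b) (csigHead k h)
  | .nxt _ a b => .imp (csigBody lam k b)
      (if k = lam - 1 then .fls else .atom (.bool a (k + 1)))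

/-- `Π_λ(P)` in the constraint language. -/
def cPiTheory {α : Type} (lam : ℕ) (P : Set (PlainRule α)) : Set (PF (CAt α)) :=
  {φ | ∃ r ∈ P, ∃ k, k < lam ∧ φ = csigRule lam k r}

/-- `Δ^c_λ`. -/
def deltaC (α : Type) (lam : ℕ) : Set (PF (CAt α)) :=
  insert (PF.atom (CAt.eqN 0 0))
    {φ | ∃ k, k + 1 < lam ∧ φ = PF.atom (CAt.diff k (k + 1) (-1))}

/-- `Ψ^c_λ(P)`. -/
def psiC {α : Type} (lam : ℕ) (P : Set (PlainRule α)) : Set (PF (CAt α)) :=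
  {φ | ∃ I a b, PlainRule.nxt I a b ∈ P ∧ ∃ k, k + 1 < lam ∧
    φ = PF.imp (.and (csigBody lam k b)
          (PF.neg (.atom (.diff k (k + 1) (-(I.m : ℤ)))))) .fls} ∪
  {φ | ∃ I a b nn, PlainRule.nxt I a b ∈ P ∧ I.n = some nn ∧ ∃ k, k + 1 < lam ∧
    φ = PF.imp (.and (csigBody lam k b)
          (PF.neg (.atom (.diff (k + 1) k ((nn : ℤ) - 1))))) .fls}

open Classical in
-- The valuation `θ^c(M)` (one component of it, built from a trace component `S`).
noncomputable def thetaC {α : Type} (lam : ℕ) (τ : ℕ → ℕ) (S : ℕ → Set α) :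
    Valu (CV α) :=
  fun x => match x with
    | .av a k => if k < lam ∧ a ∈ S k then some .tt else none
    | .tv k => if k < lam then some (.num (τ k)) else none

/-!
The translation is faithful pointwise: for `k < λ`, the pair `⟨θ(H), θ(T)⟩` satisfies `σ_k` of
a rule body (or of a disjunctive head) iff `(H, T)` satisfies the body (head) at `k`.
Hence `θ(T)` satisfies `Π_λ(P)`, while `Δ^c_λ` and `Ψ^c_λ(P)` hold because `τ` is a timing
function and the interval conditions of the `◯`-rules are met in `T`.
For minimality, `Δ^c_λ` forces any `h ≤ θ(T)` satisfying the theory to carry the same times, so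
`h = θ(H)` for a trace `H ≤ T`; translating back, `H` is an MHT-model of `P`, and minimality of
`T` gives `H = T`. The only non-literal step is the head `◯_I a`, whose translation drops the
interval condition: it is recovered from `T` because the body persists from `H` to `T`.
-/

lemma Interval.mem_full (x : ℕ) : fullInterval.mem x :=
  ⟨Nat.zero_le x, by simp [fullInterval]⟩

section ConstraintSatisfaction

variable {χ κ γ : Type} {den : κ → Valu χ → Prop} {h t : Valu χ}

lemma CSat.of_le (hden : ∀ c {h t}, Valu.le h t → den c h → den c t) (hle : Valu.le h t) :
    ∀ φ : PF κ, CSat den h t φ → CSat den t t φ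
  | .fls => id
  | .atom c => hden c hle
  | .and φ ψ => fun ⟨hφ, hψ⟩ => ⟨CSat.of_le hden hle φ hφ, CSat.of_le hden hle ψ hψ⟩
  | .or φ ψ => Or.imp (CSat.of_le hden hle φ) (CSat.of_le hden hle ψ)
  | .imp _ _ => fun ⟨_, hT⟩ => ⟨hT, hT⟩

@[simp]
lemma cSat_top : CSat den h t PF.top := by
  simp [PF.top, PF.neg, CSat]

lemma cSat_imp_self (φ ψ : PF κ) :
    CSat den t t (.imp φ ψ) ↔ (CSat den t t φ → CSat den t t ψ) := by
  simp [CSat]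

lemma cSat_neg_self (φ : PF κ) : CSat den t t (PF.neg φ) ↔ ¬ CSat den t t φ := by
  simp [PF.neg, CSat]

lemma cSat_foldr_and (F : γ → PF κ) (l : List γ) :
    CSat den h t ((l.map F).foldr .and PF.top) ↔ ∀ x ∈ l, CSat den h t (F x) := by
  induction l with
  | nil => simp
  | cons x l ih => simp [CSat, ih]

lemma cSat_foldr_or (F : γ → PF κ) (l : List γ) :
    CSat den h t ((l.map F).foldr .or .fls) ↔ ∃ x ∈ l, CSat den h t (F x) := by
  induction l with
  | nil => simp [CSat]
  | cons x l ih => simp [CSat, ih]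

lemma cModels_union {Γ Γ' : Set (PF κ)} :
    CModels den h t (Γ ∪ Γ') ↔ CModels den h t Γ ∧ CModels den h t Γ' := by
  simp only [CModels, Set.mem_union, or_imp, forall_and]

end ConstraintSatisfaction

section MetricSatisfaction

variable {α γ : Type} {lam : ℕ} {τ : ℕ → ℕ} {H T : ℕ → Set α} {k : ℕ}

@[simp]
lemma mSat_top : MSat lam τ H T k MF.top := by
  simp [MF.top, MF.neg, MSat]

lemma mSat_fin : MSat lam τ H T k MF.fin ↔ lam ≤ k + 1 := by
  simp [MF.fin, MF.neg, MSat, Interval.mem_full]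

lemma mSat_always_full (φ : MF α) :
    MSat lam τ H T k (.always fullInterval φ) ↔
      ∀ i, k ≤ i → i < lam → MSat lam τ H T i φ := by
  simp [MSat, Interval.mem_full]

lemma mSat_foldr_conj (F : γ → MF α) (l : List γ) :
    MSat lam τ H T k ((l.map F).foldr .conj MF.top) ↔ ∀ x ∈ l, MSat lam τ H T k (F x) := by
  induction l with
  | nil => simp
  | cons x l ih => simp [MSat, ih]

lemma mSat_foldr_disj (F : γ → MF α) (l : List γ) :
    MSat lam τ H T k ((l.map F).foldr .disj .fls) ↔ ∃ x ∈ l, MSat lam τ H T k (F x) := by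
  induction l with
  | nil => simp [MSat]
  | cons x l ih => simp [MSat, ih]

end MetricSatisfaction

section Translation

variable {α β : Type} {lam : ℕ} {τ : ℕ → ℕ} {H T S : ℕ → Set α} {k : ℕ}

lemma CAt.den_of_le (c : CAt α) {h t : Valu (CV α)} (hle : Valu.le h t) :
    CAt.den c h → CAt.den c t := by
  cases c with
  | bool a k => exact hle _ _
  | eqN k d => exact hle _ _
  | diff k j d => exact fun ⟨x, y, hx, hy, hxy⟩ => ⟨x, y, hle _ _ hx, hle _ _ hy, hxy⟩

lemma thetaC_av_eq_some (a : α) (k : ℕ) (d : DVal) :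
    thetaC lam τ S (.av a k) = some d ↔ d = .tt ∧ k < lam ∧ a ∈ S k := by
  by_cases hk : k < lam ∧ a ∈ S k <;> simp [thetaC, hk, eq_comm]

lemma thetaC_tv_eq_some (k : ℕ) (d : DVal) :
    thetaC lam τ S (.tv k) = some d ↔ k < lam ∧ d = .num (τ k) := by
  by_cases hk : k < lam <;> simp [thetaC, hk, eq_comm]

lemma thetaC_le_thetaC_iff : Valu.le (thetaC lam τ H) (thetaC lam τ T) ↔ IsTrace lam H T := by
  constructor
  · intro hle i hi a ha
    have hT := hle _ _ ((thetaC_av_eq_some a i _).mpr ⟨rfl, hi, ha⟩)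
    exact ((thetaC_av_eq_some a i _).mp hT).2.2
  · rintro hHT (⟨a, k⟩ | k) d hd
    · obtain ⟨rfl, hk, ha⟩ := (thetaC_av_eq_some a k d).mp hd
      exact (thetaC_av_eq_some a k _).mpr ⟨rfl, hk, hHT k hk ha⟩
    · exact (thetaC_tv_eq_some k d).mpr ((thetaC_tv_eq_some k d).mp hd)

lemma thetaC_congr (hHT : ∀ i < lam, H i = T i) : thetaC lam τ H = thetaC lam τ T := by
  funext x
  cases x with
  | av a k =>
    simp only [thetaC]
    congr 1
    exact propext (and_congr_right fun hk => by rw [hHT k hk])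
  | tv k => rfl

lemma eq_thetaC_of_le {h : Valu (CV α)} (hle : Valu.le h (thetaC lam τ T))
    (htv : ∀ k < lam, h (.tv k) = some (.num (τ k))) :
    h = thetaC lam τ (fun k => {a | h (.av a k) = some .tt}) := by
  funext x
  cases x with
  | av a k =>
    cases hv : h (.av a k) with
    | none => simp [thetaC, hv]
    | some d =>
      obtain ⟨rfl, hk, -⟩ := (thetaC_av_eq_some a k d).mp (hle _ _ hv)
      simp [thetaC, hv, hk]
  | tv k =>
    by_cases hk : k < lam
    · simp [thetaC, htv k hk, hk]
    · cases hv : h (.tv k) with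
      | none => simp [thetaC, hk]
      | some d => exact absurd ((thetaC_tv_eq_some k d).mp (hle _ _ hv)).1 hk

lemma cSat_bool_thetaC {t : Valu (CV α)} (hk : k < lam) (a : α) :
    CSat CAt.den (thetaC lam τ S) t (.atom (.bool a k)) ↔ a ∈ S k := by
  simp [CSat, CAt.den, thetaC_av_eq_some, hk]

lemma cSat_diff_thetaC {t : Valu (CV α)} {j : ℕ} (hk : k < lam) (hj : j < lam) (d : ℤ) :
    CSat CAt.den (thetaC lam τ S) t (.atom (.diff k j d)) ↔ (τ k : ℤ) - τ j ≤ d := by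
  simp [CSat, CAt.den, thetaC_tv_eq_some, hk, hj]

lemma cSat_csigLit_iff {f : β → PF (CAt α)} {g : β → MF α}
    (hH : ∀ x, CSat CAt.den (thetaC lam τ H) (thetaC lam τ T) (f x) ↔ MSat lam τ H T k (g x))
    (hT : ∀ x, CSat CAt.den (thetaC lam τ T) (thetaC lam τ T) (f x) ↔ MSat lam τ T T k (g x))
    (l : Lit β) :
    CSat CAt.den (thetaC lam τ H) (thetaC lam τ T) (csigLit f l) ↔
      MSat lam τ H T k (litMF g l) := by
  cases l with
  | pos x => exact hH x
  | neg x => simp only [csigLit, litMF, PF.neg, MF.neg, CSat, MSat, hH, hT]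

lemma cSat_csigBAt_iff (hk : k < lam) (x : BAt α) :
    CSat CAt.den (thetaC lam τ H) (thetaC lam τ T) (csigBAt lam k x) ↔
      MSat lam τ H T k x.mf := by
  cases x with
  | atm a => exact cSat_bool_thetaC hk a
  | init => by_cases h0 : k = 0 <;> simp [csigBAt, BAt.mf, MSat, CSat, h0]
  | fin =>
    rw [BAt.mf, mSat_fin]
    by_cases hl : k = lam - 1 <;> simp [csigBAt, CSat, hl] <;> omega

lemma cSat_csigBody_iff (hk : k < lam) (b : List (Lit (BAt α))) :
    CSat CAt.den (thetaC lam τ H) (thetaC lam τ T) (csigBody lam k b) ↔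
      MSat lam τ H T k (bodyMF b) := by
  rw [csigBody, bodyMF, cSat_foldr_and, mSat_foldr_conj]
  exact forall₂_congr fun l _ =>
    cSat_csigLit_iff (cSat_csigBAt_iff hk) (cSat_csigBAt_iff hk) l

lemma cSat_csigHead_iff (hk : k < lam) (hd : List (Lit α)) :
    CSat CAt.den (thetaC lam τ H) (thetaC lam τ T) (csigHead k hd) ↔
      MSat lam τ H T k (headMF hd) := by
  rw [csigHead, MetricASP.headMF, cSat_foldr_or, mSat_foldr_disj]
  exact exists_congr fun l => and_congr_right fun _ =>
    cSat_csigLit_iff (g := MF.atom) (cSat_bool_thetaC hk) (cSat_bool_thetaC hk) l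

lemma mSat_bodyMF_of_isTrace (hHT : IsTrace lam H T) (hk : k < lam) {b : List (Lit (BAt α))}
    (hb : MSat lam τ H T k (bodyMF b)) : MSat lam τ T T k (bodyMF b) := by
  rw [← cSat_csigBody_iff hk] at hb ⊢
  exact CSat.of_le CAt.den_of_le (thetaC_le_thetaC_iff.mpr hHT) _ hb

end Translation

section Rules

variable {α : Type}

def PlainRule.body : PlainRule α → List (Lit (BAt α))
  | .basic _ b => b
  | .nxt _ _ b => b

def PlainRule.headMF : PlainRule α → MF α
  | .basic hd _ => MetricASP.headMF hd
  | .nxt I a _ => .next I (.atom a)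

def PlainRule.csigHead (lam k : ℕ) : PlainRule α → PF (CAt α)
  | .basic hd _ => MetricASP.csigHead k hd
  | .nxt _ a _ => if k = lam - 1 then .fls else .atom (.bool a (k + 1))

lemma PlainRule.mf_eq (r : PlainRule α) :
    r.mf = .always fullInterval (.impl (bodyMF r.body) r.headMF) := by
  cases r <;> rfl

lemma csigRule_eq (lam k : ℕ) (r : PlainRule α) :
    csigRule lam k r = .imp (csigBody lam k r.body) (r.csigHead lam k) := by
  cases r <;> rfl

variable {lam : ℕ} {τ : ℕ → ℕ} {H T : ℕ → Set α} {k : ℕ}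

lemma mSat_mf_iff (r : PlainRule α) :
    MSat lam τ H T 0 r.mf ↔ ∀ k < lam, MSat lam τ H T k (.impl (bodyMF r.body) r.headMF) := by
  simp [PlainRule.mf_eq, mSat_always_full]

lemma cSat_csigHead_of_mSat (hk : k < lam) (r : PlainRule α)
    (hr : MSat lam τ H T k r.headMF) :
    CSat CAt.den (thetaC lam τ H) (thetaC lam τ T) (r.csigHead lam k) := by
  cases r with
  | basic hd b => exact (cSat_csigHead_iff hk hd).mpr hr
  | nxt I a b =>
    obtain ⟨hk1, ha, -⟩ := hr
    rw [PlainRule.csigHead, if_neg (by omega), cSat_bool_thetaC hk1]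
    exact ha

lemma mSat_headMF_of_cSat (hk : k < lam) (r : PlainRule α)
    (hr : CSat CAt.den (thetaC lam τ H) (thetaC lam τ T) (r.csigHead lam k))
    (hT : MSat lam τ T T k r.headMF) : MSat lam τ H T k r.headMF := by
  cases r with
  | basic hd b => exact (cSat_csigHead_iff hk hd).mp hr
  | nxt I a b =>
    obtain ⟨hk1, -, hI⟩ := hT
    rw [PlainRule.csigHead, if_neg (by omega), cSat_bool_thetaC hk1] at hr
    exact ⟨hk1, hr, hI⟩

lemma cSat_csigRule_of_mSat (hk : k < lam) (r : PlainRule α)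
    (hr : MSat lam τ T T k (.impl (bodyMF r.body) r.headMF)) :
    CSat CAt.den (thetaC lam τ T) (thetaC lam τ T) (csigRule lam k r) := by
  rw [csigRule_eq, cSat_imp_self, cSat_csigBody_iff hk]
  exact fun hb => cSat_csigHead_of_mSat hk r (hr.1 hb)

lemma mSat_of_cSat_csigRule (hHT : IsTrace lam H T) (hk : k < lam) (r : PlainRule α)
    (hC : CSat CAt.den (thetaC lam τ H) (thetaC lam τ T) (csigRule lam k r))
    (hT : MSat lam τ T T k (.impl (bodyMF r.body) r.headMF)) :
    MSat lam τ H T k (.impl (bodyMF r.body) r.headMF) := by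
  refine ⟨fun hb => mSat_headMF_of_cSat hk r ?_ (hT.1 (mSat_bodyMF_of_isTrace hHT hk hb)), hT.2⟩
  rw [csigRule_eq] at hC
  exact hC.1 ((cSat_csigBody_iff hk _).mpr hb)

end Rules

section Theories

variable {α : Type} {lam : ℕ} {τ : ℕ → ℕ} {H T : ℕ → Set α} {P : Set (PlainRule α)}

lemma cModels_thetaC_cPiTheory (hT : MHTModels lam τ T T (PlainRule.mf '' P)) :
    CModels CAt.den (thetaC lam τ T) (thetaC lam τ T) (cPiTheory lam P) := by
  rintro _ ⟨r, hr, k, hk, rfl⟩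
  exact cSat_csigRule_of_mSat hk r ((mSat_mf_iff r).mp (hT _ ⟨r, hr, rfl⟩) k hk)

lemma mhtModels_of_cModels_cPiTheory (hT : MHTModels lam τ T T (PlainRule.mf '' P))
    (hHT : IsTrace lam H T)
    (hC : CModels CAt.den (thetaC lam τ H) (thetaC lam τ T) (cPiTheory lam P)) :
    MHTModels lam τ H T (PlainRule.mf '' P) := by
  rintro _ ⟨r, hr, rfl⟩
  refine (mSat_mf_iff r).mpr fun k hk => mSat_of_cSat_csigRule hHT hk r ?_ ?_
  · exact hC _ ⟨r, hr, k, hk, rfl⟩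
  · exact (mSat_mf_iff r).mp (hT _ ⟨r, hr, rfl⟩) k hk

lemma cModels_thetaC_deltaC (hlam : 1 ≤ lam) (hτ : IsTiming lam τ) (t : Valu (CV α)) :
    CModels CAt.den (thetaC lam τ T) t (deltaC α lam) := by
  rintro _ (rfl | ⟨k, hk, rfl⟩)
  · simp [CSat, CAt.den, thetaC_tv_eq_some, hτ.1, show 0 < lam by omega]
  · have := hτ.2 k hk
    rw [cSat_diff_thetaC (by omega) hk]
    omega

lemma tv_eq_of_cModels_deltaC {h t : Valu (CV α)} (hτ0 : τ 0 = 0)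
    (hle : Valu.le h (thetaC lam τ T)) (hC : CModels CAt.den h t (deltaC α lam)) :
    ∀ k < lam, h (.tv k) = some (.num (τ k)) := by
  rintro (_ | k) hk
  · rw [hτ0]
    exact hC _ (Set.mem_insert _ _)
  · obtain ⟨-, y, -, hy, -⟩ := hC _ (Set.mem_insert_of_mem _ ⟨k, hk, rfl⟩)
    rw [hy, ((thetaC_tv_eq_some _ _).mp (hle _ _ hy)).2]

lemma cModels_thetaC_psiC (hτ : IsTiming lam τ) (hT : MHTModels lam τ T T (PlainRule.mf '' P)) :
    CModels CAt.den (thetaC lam τ T) (thetaC lam τ T) (psiC lam P) := by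
  have hnext : ∀ {I a b}, PlainRule.nxt I a b ∈ P → ∀ {k}, k + 1 < lam →
      CSat CAt.den (thetaC lam τ T) (thetaC lam τ T) (csigBody lam k b) →
      τ k < τ (k + 1) ∧ I.mem (τ (k + 1) - τ k) := fun hr k hk hb =>
    ⟨hτ.2 k hk, (((mSat_mf_iff _).mp (hT _ ⟨_, hr, rfl⟩) k (by omega)).1
      ((cSat_csigBody_iff (by omega) _).mp hb)).2.2⟩
  rintro _ (⟨I, a, b, hr, k, hk, rfl⟩ | ⟨I, a, b, n, hr, hn, k, hk, rfl⟩) <;>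
    rw [cSat_imp_self] <;> rintro ⟨hb, hd⟩ <;>
    obtain ⟨hlt, hI⟩ := hnext hr hk hb <;>
    rw [cSat_neg_self, cSat_diff_thetaC (by omega) (by omega)] at hd
  · have := hI.1
    omega
  · have := hI.2 n hn
    omega

end Theories

theorem stmt2 {α : Type} (lam : ℕ) (hlam : 1 ≤ lam)
    (τ : ℕ → ℕ) (hτ : IsTiming lam τ)
    (T : ℕ → Set α) (P : Set (PlainRule α))
    (hM : MetricEqModel lam τ T (PlainRule.mf '' P)) :
    CEqModel CAt.den (thetaC lam τ T)
      (cPiTheory lam P ∪ deltaC α lam ∪ psiC lam P) := by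
  obtain ⟨hT, hmin⟩ := hM
  refine ⟨cModels_union.mpr ⟨cModels_union.mpr ⟨cModels_thetaC_cPiTheory hT,
    cModels_thetaC_deltaC hlam hτ _⟩, cModels_thetaC_psiC hτ hT⟩, fun h hle hne hC => ?_⟩
  obtain ⟨⟨hPi, hDelta⟩, -⟩ := And.imp_left cModels_union.mp (cModels_union.mp hC)
  set H : ℕ → Set α := fun k => {a | h (.av a k) = some .tt}
  have hh : h = thetaC lam τ H := eq_thetaC_of_le hle (tv_eq_of_cModels_deltaC hτ.1 hle hDelta)
  rw [hh] at hle hne hPi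
  have hHT : IsTrace lam H T := thetaC_le_thetaC_iff.mp hle
  have hdiff : ∃ i < lam, H i ≠ T i := by
    by_contra! hall
    exact hne (thetaC_congr hall)
  exact hmin H hHT hdiff (mhtModels_of_cModels_cPiTheory hT hHT hPi)

end MetricASP
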